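/- Let {X_ℓ, f_ℓ} be an inverse sequence of compact metric spaces with surjective continuous bonding functions and let g : varprojlim{X_ℓ, f_ℓ} → varprojlim{X_ℓ, f_ℓ} be a continuous function. The following are equivalent: (1) g(x) ≠ x for each point x ∈ varprojlim{X_ℓ, f_ℓ}; (2) for all sequences (n_ℓ), (m_ℓ) of positive integers with m_{k+1} ≥ m_k, n_{k+1} > n_k, and m_k ≥ n_k for each k, and for every sequence (H_ℓ) of upper semicontinuous set-valued functions H_ℓ : X_{m_ℓ} ⊸ X_{n_ℓ} satisfying (a) f_{j,n_r}(H_r(x)) ⊆ f_{j,n_k}(H_k(f_{m_k,m_r}(x))) for each positive integer k, each j ∈ {1, …, n_k}, each r > k and each x ∈ X_{m_r}, (b) f_{j,n_k}(p_{n_k}(g(x))) ∈ f_{j,n_k}(H_k(p_{m_k}(x))) for each positive integer k, each j ∈ {1, …, n_k}, and each x ∈ varprojlim{X_ℓ, f_ℓ}, and (c) lim_{k→∞} diam(f_{j,n_k}(H_k(p_{m_k}(x)))) = 0 for each positive integer j and each x ∈ varprojlim{X_ℓ, f_ℓ}, there exist a positive integer k and j ∈ {1, …, n_k} such that f_{j,m_k}(x)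 ∉ f_{j,n_k}(H_k(x)) for each point x ∈ X_{m_k}. -/

import Mathlib

open Metric Filter Set Function

/-- The inverse limit of an inverse sequence `{X n, f n}` of spaces with
single-valued bonding maps `f n : X (n+1) → X n`. -/
def invLim (X : ℕ → Type*) (f : ∀ n, X (n + 1) → X n) : Set (∀ n, X n) :=
  {x | ∀ n, x n = f n (x (n + 1))}

/-- The composite bonding map `f_{n,m} : X m → X n` for `n ≤ m`. -/
def bondMap {X : ℕ → Type*} (f : ∀ n, X (n + 1) → X n) {n m : ℕ} (h : n ≤ m) :
    X m → X n :=
  Nat.leRecOn (C := fun k => X k → X n) h (fun {k} g => g ∘ f k) id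

/-- A set-valued function is upper semicontinuous (with nonempty closed values):
all of its values are nonempty closed sets and its graph is closed. -/
def IsUSC {A B : Type*} [TopologicalSpace A] [TopologicalSpace B] (F : A → Set B) : Prop :=
  (∀ a, (F a).Nonempty) ∧ (∀ a, IsClosed (F a)) ∧ IsClosed {p : A × B | p.2 ∈ F p.1}

/-- The `T_{n,m}` transformation of a map between inverse limits:
`T_{n,m}(g)(x) = q_n (g (p_m ⁻¹ x))`. -/
def Ttrans {X Y : ℕ → Type*} {f : ∀ n, X (n + 1) → X n} {gs : ∀ n, Y (n + 1) → Y n}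
    (g : ↥(invLim X f) → ↥(invLim Y gs)) (n m : ℕ) (x : X m) : Set (Y n) :=
  {y | ∃ z : ↥(invLim X f), z.1 m = x ∧ (g z).1 n = y}

/-- A space has the fixed point property if every continuous self-map has a fixed point. -/
def HasFPP (Z : Type*) [TopologicalSpace Z] : Prop :=
  ∀ g : Z → Z, Continuous g → ∃ p, g p = p

/-!
If `g z = z`, the set-valued maps `H k = T_{k,k}(g)`, `x ↦ {g(w)_k : w_k = x}`, satisfy (a)–(c)
(for (c), compactness of the inverse limit squeezes `{g(w)_j : w_k = z_k}` down to `g(z)_j`),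
yet `z_k ∈ H k z_k` for every `k`. Conversely, if for every `k` some `x` has
`f_{n_k,m_k}(x) ∈ H k x`, lift these points to the inverse limit and take a cluster point `z`:
the closed graphs and (a) give `z_j ∈ f_{j,n_k}(H k z_{m_k})` for all `k` and `j ≤ n_k`; these
sets also contain `g(z)_j` by (b) and shrink to points by (c), so `g z = z`.
-/

open Topology

section InverseLimit

variable {X : ℕ → Type*} {f : ∀ n, X (n + 1) → X n}

theorem bondMap_self {n : ℕ} (h : n ≤ n) : bondMap f h = id :=
  Nat.leRecOn_self (C := fun k => X k → X n) (next := fun {k} g => g ∘ f k) id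

theorem bondMap_succ {n m : ℕ} (h : n ≤ m + 1) (h' : n ≤ m) (x : X (m + 1)) :
    bondMap f h x = bondMap f h' (f m x) :=
  congrFun (Nat.leRecOn_succ (C := fun k => X k → X n) (next := fun {k} g => g ∘ f k)
    h' (h2 := h) id) x

theorem bondMap_succ_left {n m : ℕ} (h : n + 1 ≤ m) (x : X m) :
    f n (bondMap f h x) = bondMap f (Nat.le_of_succ_le h) x := by
  induction m, h using Nat.le_induction with
  | base => rw [bondMap_self, bondMap_succ _ le_rfl, bondMap_self]; rfl
  | succ m hm ih => rw [bondMap_succ _ hm, bondMap_succ _ (Nat.le_of_succ_le hm), ih]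

theorem continuous_bondMap [∀ n, TopologicalSpace (X n)] (hfc : ∀ n, Continuous (f n))
    {n m : ℕ} (h : n ≤ m) : Continuous (bondMap f h) := by
  induction m, h using Nat.le_induction with
  | base => rw [bondMap_self]; exact continuous_id
  | succ m hm ih =>
    rw [show bondMap f (hm.trans m.le_succ) = bondMap f hm ∘ f m from
      funext (bondMap_succ _ hm)]
    exact ih.comp (hfc m)

theorem bondMap_eq_of_mem_invLim {z : ∀ n, X n} (hz : z ∈ invLim X f) {n m : ℕ} (h : n ≤ m) :
    bondMap f h (z m) = z n := by
  induction m, h using Nat.le_induction with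
  | base => rw [bondMap_self]; rfl
  | succ m hm ih => rw [bondMap_succ _ hm, ← hz m, ih]

theorem exists_mem_invLim_apply_eq (hfs : ∀ n, Surjective (f n)) (m : ℕ) (x : X m) :
    ∃ z ∈ invLim X f, z m = x := by
  -- `w t ∈ X (m + t)` lies over `x`; coordinate `n` is projected down from `w n`, avoiding casts
  -- between `X (m + n)` and `X n`.
  let w : ∀ t, X (m + t) := fun t => Nat.rec x (fun t y => surjInv (hfs (m + t)) y) t
  have hw : ∀ t, f (m + t) (w (t + 1)) = w t := fun t => surjInv_eq (hfs (m + t)) (w t)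
  refine ⟨fun n => bondMap f (Nat.le_add_left n m) (w n), fun n => ?_, ?_⟩
  · rw [bondMap_succ_left (f := f), bondMap_succ _ (Nat.le_add_left n m), hw]
  · have hwx : ∀ t, bondMap f (Nat.le_add_right m t) (w t) = x := by
      intro t
      induction t with
      | zero => rw [bondMap_self]; rfl
      | succ t ih => rw [bondMap_succ _ (Nat.le_add_right m t), hw t, ih]
    exact hwx m

theorem isClosed_invLim [∀ n, TopologicalSpace (X n)] [∀ n, T2Space (X n)]
    (hfc : ∀ n, Continuous (f n)) : IsClosed (invLim X f) := by
  rw [invLim, ofPred_forall]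
  exact isClosed_iInter fun n =>
    isClosed_eq (continuous_apply n) ((hfc n).comp (continuous_apply (n + 1)))

theorem isCompact_invLim [∀ n, TopologicalSpace (X n)] [∀ n, CompactSpace (X n)]
    [∀ n, T2Space (X n)] (hfc : ∀ n, Continuous (f n)) : IsCompact (invLim X f) :=
  (isClosed_invLim hfc).isCompact

theorem continuous_invLim_apply [∀ n, TopologicalSpace (X n)] (n : ℕ) :
    Continuous fun w : invLim X f => w.1 n :=
  (continuous_apply n).comp continuous_subtype_val

end InverseLimit

theorem tendsto_diam_image_of_iInter_subset {α β : Type*} [TopologicalSpace α] [CompactSpace α]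
    [PseudoMetricSpace β] {φ : α → β} (hφ : Continuous φ) {A : ℕ → Set α} (hA : Antitone A)
    (hAc : ∀ k, IsClosed (A k)) {z : α} (hz : ⋂ k, A k ⊆ {z}) :
    Tendsto (fun k => diam (φ '' A k)) atTop (𝓝 0) := by
  rw [Metric.tendsto_atTop]
  intro ε hε
  obtain ⟨N, hN⟩ := exists_subset_nhds_of_isCompact' hA.directed_ge
    (fun k => (hAc k).isCompact) hAc (U := φ ⁻¹' ball (φ z) (ε / 3)) fun x hx => by
      rw [hz hx]
      exact hφ.continuousAt.preimage_mem_nhds (ball_mem_nhds _ (by positivity))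
  refine ⟨N, fun k hk => ?_⟩
  have hball : φ '' A k ⊆ ball (φ z) (ε / 3) := image_subset_iff.2 ((hA hk).trans hN)
  have hdiam := (diam_mono hball isBounded_ball).trans (diam_ball (by positivity))
  rw [dist_zero_right, Real.norm_eq_abs, abs_of_nonneg diam_nonneg]
  linarith

theorem eq_of_tendsto_diam {α ι : Type*} [MetricSpace α] {l : Filter ι} [l.NeBot]
    {S : ι → Set α} {x y : α} (hS : ∀ᶠ k in l, Bornology.IsBounded (S k) ∧ x ∈ S k ∧ y ∈ S k)
    (hd : Tendsto (fun k => diam (S k)) l (𝓝 0)) : x = y :=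
  dist_le_zero.1 <| ge_of_tendsto hd <| hS.mono fun _ hk => dist_le_diam_of_mem hk.1 hk.2.1 hk.2.2

section Ttrans

variable {X : ℕ → Type*} {f : ∀ n, X (n + 1) → X n} (g : invLim X f → invLim X f)

theorem Ttrans_eq_image (n m : ℕ) (x : X m) :
    Ttrans g n m x = (fun w => (g w).1 n) '' {w | w.1 m = x} :=
  rfl

theorem image_bondMap_Ttrans {j n : ℕ} (hj : j ≤ n) (m : ℕ) (x : X m) :
    bondMap f hj '' Ttrans g n m x = Ttrans g j m x := by
  simp only [Ttrans_eq_image, image_image, bondMap_eq_of_mem_invLim (g _).2 hj]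

theorem Ttrans_subset_Ttrans_bondMap (n : ℕ) {k r : ℕ} (h : k ≤ r) (x : X r) :
    Ttrans g n r x ⊆ Ttrans g n k (bondMap f h x) := by
  rintro _ ⟨w, rfl, rfl⟩
  exact ⟨w, (bondMap_eq_of_mem_invLim w.2 h).symm, rfl⟩

variable [∀ n, TopologicalSpace (X n)] [∀ n, CompactSpace (X n)] [∀ n, T2Space (X n)]

theorem isUSC_Ttrans (hfc : ∀ n, Continuous (f n)) (hfs : ∀ n, Surjective (f n))
    (hg : Continuous g) (n m : ℕ) : IsUSC (Ttrans g n m) := by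
  have : CompactSpace (invLim X f) := isCompact_iff_compactSpace.1 (isCompact_invLim hfc)
  have hgraph : IsClosed {p : X m × X n | p.2 ∈ Ttrans g n m p.1} := by
    convert (isCompact_range ((continuous_invLim_apply m).prodMk
      ((continuous_invLim_apply n).comp hg))).isClosed using 1
    ext ⟨a, b⟩
    simp [Ttrans, Prod.ext_iff, eq_comm]
  refine ⟨fun x => ?_, fun x => hgraph.preimage (Continuous.prodMk_right x), hgraph⟩
  obtain ⟨z, hz, rfl⟩ := exists_mem_invLim_apply_eq hfs m x
  exact ⟨_, ⟨z, hz⟩, rfl, rfl⟩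

end Ttrans

theorem tendsto_diam_Ttrans {X : ℕ → Type*} [∀ n, MetricSpace (X n)] [∀ n, CompactSpace (X n)]
    {f : ∀ n, X (n + 1) → X n} (hfc : ∀ n, Continuous (f n)) (g : invLim X f → invLim X f)
    (hg : Continuous g) (j : ℕ) (z : invLim X f) :
    Tendsto (fun k => diam (Ttrans g j k (z.1 k))) atTop (𝓝 0) := by
  have : CompactSpace (invLim X f) := isCompact_iff_compactSpace.1 (isCompact_invLim hfc)
  simp only [Ttrans_eq_image]
  refine tendsto_diam_image_of_iInter_subset ((continuous_invLim_apply j).comp hg)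
    (fun k l hkl w hw => ?_) (fun k => isClosed_eq (continuous_invLim_apply k) continuous_const)
    (z := z) fun w hw => ?_
  · simp only [mem_ofPred_eq] at hw ⊢
    rw [← bondMap_eq_of_mem_invLim w.2 hkl, hw, bondMap_eq_of_mem_invLim z.2]
  · exact Subtype.ext (funext (mem_iInter.1 hw))

theorem isClosed_setOf_mem_image_of_isClosed {A B C : Type*} [TopologicalSpace A]
    [TopologicalSpace B] [TopologicalSpace C] [CompactSpace A] [CompactSpace B] [T2Space A]
    [T2Space C] {F : A → Set B} (hF : IsClosed {p : A × B | p.2 ∈ F p.1}) {φ : B → C}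
    (hφ : Continuous φ) : IsClosed {p : A × C | p.2 ∈ φ '' F p.1} := by
  convert (hF.isCompact.image (continuous_fst.prodMk (hφ.comp continuous_snd))).isClosed using 1
  ext ⟨a, c⟩
  simp [Prod.ext_iff, and_left_comm, eq_comm]

section FixedPoint

variable {X : ℕ → Type*} {f : ∀ n, X (n + 1) → X n}

theorem exists_mem_invLim_forall_mem_image_bondMap
    [∀ n, TopologicalSpace (X n)] [∀ n, CompactSpace (X n)] [∀ n, T2Space (X n)]
    (hfc : ∀ n, Continuous (f n)) (hfs : ∀ n, Surjective (f n)) {ns ms : ℕ → ℕ}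
    (hns : Monotone ns) (hms : Monotone ms) (hnm : ∀ k, ns k ≤ ms k)
    {H : ∀ k, X (ms k) → Set (X (ns k))}
    (hH : ∀ k, IsClosed {p : X (ms k) × X (ns k) | p.2 ∈ H k p.1})
    (hnest : ∀ k r : ℕ, k < r → ∀ (hnr : ns k ≤ ns r) (hmr : ms k ≤ ms r),
      ∀ j : ℕ, ∀ hj : j ≤ ns k, ∀ x : X (ms r),
        bondMap f (hj.trans hnr) '' H r x ⊆ bondMap f hj '' H k (bondMap f hmr x))
    (hx : ∀ k, ∃ x : X (ms k), bondMap f (hnm k) x ∈ H k x) :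
    ∃ z ∈ invLim X f, ∀ k j (hj : j ≤ ns k), z j ∈ bondMap f hj '' H k (z (ms k)) := by
  choose x hx using hx
  choose Z hZ hZx using fun k => exists_mem_invLim_apply_eq hfs (ms k) (x k)
  have hZH : ∀ r, Z r (ns r) ∈ H r (Z r (ms r)) := fun r => by
    rw [← bondMap_eq_of_mem_invLim (hZ r) (hnm r), hZx]
    exact hx r
  have hZmem : ∀ k j (hj : j ≤ ns k), ∀ r ≥ k, Z r j ∈ bondMap f hj '' H k (Z r (ms k)) := by
    intro k j hj r hr
    rcases hr.eq_or_lt with rfl | hkr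
    · exact ⟨_, hZH _, bondMap_eq_of_mem_invLim (hZ _) hj⟩
    · have := hnest k r hkr (hns hkr.le) (hms hkr.le) j hj (Z r (ms r))
        ⟨_, hZH r, bondMap_eq_of_mem_invLim (hZ r) _⟩
      rwa [bondMap_eq_of_mem_invLim (hZ r)] at this
  obtain ⟨z, hz, hcl⟩ := (isCompact_invLim hfc).exists_mapClusterPt (f := atTop)
    (tendsto_principal.2 (Eventually.of_forall hZ))
  refine ⟨z, hz, fun k j hj => ?_⟩
  have hclosed : IsClosed {w : ∀ n, X n | w j ∈ bondMap f hj '' H k (w (ms k))} :=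
    (isClosed_setOf_mem_image_of_isClosed (hH k) (continuous_bondMap hfc hj)).preimage
      ((continuous_apply (ms k)).prodMk (continuous_apply j))
  exact hclosed.mem_of_mapClusterPt hcl ((eventually_ge_atTop k).mono (hZmem k j hj))

theorem exists_fixedPoint_of_forall_exists_mem [∀ n, MetricSpace (X n)] [∀ n, CompactSpace (X n)]
    (hfc : ∀ n, Continuous (f n)) (hfs : ∀ n, Surjective (f n)) (g : invLim X f → invLim X f)
    {ns ms : ℕ → ℕ} (hns : StrictMono ns) (hms : Monotone ms) (hnm : ∀ k, ns k ≤ ms k)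
    {H : ∀ k, X (ms k) → Set (X (ns k))}
    (hH : ∀ k, IsClosed {p : X (ms k) × X (ns k) | p.2 ∈ H k p.1})
    (hnest : ∀ k r : ℕ, k < r → ∀ (hnr : ns k ≤ ns r) (hmr : ms k ≤ ms r),
      ∀ j : ℕ, ∀ hj : j ≤ ns k, ∀ x : X (ms r),
        bondMap f (hj.trans hnr) '' H r x ⊆ bondMap f hj '' H k (bondMap f hmr x))
    (hgH : ∀ k j : ℕ, ∀ hj : j ≤ ns k, ∀ z : invLim X f,
      bondMap f hj ((g z).1 (ns k)) ∈ bondMap f hj '' H k (z.1 (ms k)))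
    (hdiam : ∀ j : ℕ, ∀ z : invLim X f,
      Tendsto (fun k => diam (if hj : j ≤ ns k then bondMap f hj '' H k (z.1 (ms k))
        else (∅ : Set (X j)))) atTop (𝓝 0))
    (hx : ∀ k, ∃ x : X (ms k), bondMap f (hnm k) x ∈ H k x) :
    ∃ z, g z = z := by
  obtain ⟨z, hz, hzH⟩ :=
    exists_mem_invLim_forall_mem_image_bondMap hfc hfs hns.monotone hms hnm hH hnest hx
  refine ⟨⟨z, hz⟩, Subtype.ext (funext fun j => eq_of_tendsto_diam ?_ (hdiam j ⟨z, hz⟩))⟩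
  filter_upwards [eventually_ge_atTop j] with k hjk
  have hj : j ≤ ns k := hjk.trans (hns.id_le k)
  rw [dif_pos hj, ← bondMap_eq_of_mem_invLim (g _).2 hj]
  exact ⟨isBounded_of_compactSpace, hgH k j hj ⟨z, hz⟩, hzH k j hj⟩

end FixedPoint

theorem stmt13
    {X : ℕ → Type*} [∀ n, MetricSpace (X n)] [∀ n, CompactSpace (X n)]
    (f : ∀ n, X (n + 1) → X n)
    (hfc : ∀ n, Continuous (f n)) (hfs : ∀ n, Surjective (f n))
    (g : ↥(invLim X f) → ↥(invLim X f)) (hg : Continuous g) :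
    (∀ x : ↥(invLim X f), g x ≠ x) ↔
    (∀ ns ms : ℕ → ℕ,
      (∀ k, ms k ≤ ms (k + 1)) → (∀ k, ns k < ns (k + 1)) →
      ∀ hnm : (∀ k, ns k ≤ ms k),
      ∀ H : ∀ k, X (ms k) → Set (X (ns k)),
      (∀ k, IsUSC (H k)) →
      (∀ k r : ℕ, k < r → ∀ (hnr : ns k ≤ ns r) (hmr : ms k ≤ ms r),
        ∀ j : ℕ, ∀ hj : j ≤ ns k, ∀ x : X (ms r),
          bondMap f (hj.trans hnr) '' H r x ⊆
            bondMap f hj '' H k (bondMap f hmr x)) →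
      (∀ k j : ℕ, ∀ hj : j ≤ ns k, ∀ z : ↥(invLim X f),
        bondMap f hj ((g z).1 (ns k)) ∈ bondMap f hj '' H k (z.1 (ms k))) →
      (∀ j : ℕ, ∀ z : ↥(invLim X f),
        Tendsto (fun k =>
            diam (if hj : j ≤ ns k then
              bondMap f hj '' H k (z.1 (ms k))
            else (∅ : Set (X j))))
          atTop (nhds (0 : ℝ))) →
      ∃ k j : ℕ, ∃ hj : j ≤ ns k, ∀ x : X (ms k),
        bondMap f (hj.trans (hnm k)) x ∉ bondMap f hj '' H k x) := by
  constructor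
  · intro hfix ns ms hms hns hnm H hH hnest hgH hdiam
    by_contra! hx
    obtain ⟨z, hz⟩ := exists_fixedPoint_of_forall_exists_mem hfc hfs g
      (strictMono_nat_of_lt_succ hns) (monotone_nat_of_le_succ hms) hnm (fun k => (hH k).2.2)
      hnest hgH hdiam fun k => by simpa [bondMap_self] using hx k (ns k) le_rfl
    exact hfix z hz
  · intro hT x hgx
    obtain ⟨k, j, hj, hk⟩ := hT (fun k => k) (fun k => k) (fun k => k.le_succ)
      (fun k => k.lt_succ_self) (fun _ => le_rfl) (fun k => Ttrans g k k)
      (fun k => isUSC_Ttrans g hfc hfs hg k k)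
      (fun k r _ _ hmr j hj y => by
        rw [image_bondMap_Ttrans, image_bondMap_Ttrans]
        exact Ttrans_subset_Ttrans_bondMap g j hmr y)
      (fun k j hj z => mem_image_of_mem _ ⟨z, rfl, rfl⟩)
      (fun j z => (tendsto_diam_Ttrans hfc g hg j z).congr' <|
        (eventually_ge_atTop j).mono fun k hjk => by simp only [dif_pos hjk, image_bondMap_Ttrans])
    exact hk (x.1 k) (mem_image_of_mem _ ⟨x, rfl, by rw [hgx]⟩)
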